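/- For the stated initial profiles, the potential temperature θ(z) = T(z)·(p_ref/p(z))^Γ, where T(z) = p(z)/(R·ρ(z)), satisfies θ(z) = T_ref·exp(N²z/g); in particular (dθ/dz)/θ = N²/g, so the buoyancy frequency is exactly N. -/

import Mathlib

open Real

/-- The potential temperature `θ(z) = T(z) (p_ref / p(z))^Γ`, with `T = p/(Rρ)`, equals
`T_ref exp(N² z / g)`; in particular `θ'/θ = N²/g`, so the buoyancy frequency is exactly `N`. -/
theorem potential_temperature_profile (g N pref R Tref γ Γ ρref : ℝ)
    (hg : 0 < g) (hN : 0 < N) (hp : 0 < pref) (hR : 0 < R) (hT : 0 < Tref) (hγ : 1 < γ)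
    (hΓ : Γ = (γ - 1) / γ) (hρref : ρref = pref / (R * Tref))
    (p ρ T θ : ℝ → ℝ)
    (hpdef : ∀ z, p z =
      pref * (1 - (g / N ^ 2) * Γ * (ρref / pref) * (1 - exp (-(N ^ 2 * z) / g))) ^ (1 / Γ))
    (hρdef : ∀ z, ρ z = ρref * (p z / pref) ^ (1 / γ) * exp (-(N ^ 2 * z) / g))
    (hTdef : ∀ z, T z = p z / (R * ρ z))
    (hθdef : ∀ z, θ z = T z * (pref / p z) ^ Γ)
    (z : ℝ)
    (hbase : 0 < 1 - (g / N ^ 2) * Γ * (ρref / pref) * (1 - exp (-(N ^ 2 * z) / g))) :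
    θ z = Tref * exp (N ^ 2 * z / g) ∧
      HasDerivAt θ ((N ^ 2 / g) * θ z) z := by
  have hγ0 : (0:ℝ) < γ := by linarith
  have hΓpos : 0 < Γ := by rw [hΓ]; exact div_pos (by linarith) hγ0
  have hΓne : Γ ≠ 0 := ne_of_gt hΓpos
  have hρrefpos : 0 < ρref := by rw [hρref]; positivity
  have key : ∀ w, 0 < 1 - (g / N ^ 2) * Γ * (ρref / pref) * (1 - exp (-(N ^ 2 * w) / g)) →
      θ w = Tref * exp (N ^ 2 * w / g) := by
    intro w hB
    set B := 1 - (g / N ^ 2) * Γ * (ρref / pref) * (1 - exp (-(N ^ 2 * w) / g)) with hBdef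
    set a := 1 / Γ with ha
    have hpw : p w = pref * B ^ a := hpdef w
    have hBa : 0 < B ^ a := rpow_pos_of_pos hB _
    have hE : 0 < exp (-(N ^ 2 * w) / g) := exp_pos _
    have hpos : 0 < p w := by rw [hpw]; positivity
    have hdivp : p w / pref = B ^ a := by rw [hpw]; field_simp
    have hρw : ρ w = ρref * B ^ (a * (1 / γ)) * exp (-(N ^ 2 * w) / g) := by
      rw [hρdef, hdivp, Real.rpow_mul hB.le]
    have hγne : γ ≠ 0 := ne_of_gt hγ0
    have hγ1ne : γ - 1 ≠ 0 := by linarith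
    have hinv : (pref / p w) ^ Γ = B⁻¹ := by
      rw [hpw]
      have h0 : pref / (pref * B ^ a) = (B ^ a)⁻¹ := by field_simp
      rw [h0, Real.inv_rpow hBa.le, ← Real.rpow_mul hB.le]
      have : a * Γ = 1 := by rw [ha, one_div, inv_mul_cancel₀ hΓne]
      rw [this, Real.rpow_one]
    have hsplit : B ^ a = B ^ (a * (1 / γ)) * B := by
      have h1 : a = a * (1 / γ) + 1 := by
        rw [ha, hΓ]; field_simp; ring
      conv_lhs => rw [h1]
      rw [Real.rpow_add hB, Real.rpow_one]
    have hBγpos : 0 < B ^ (a * (1 / γ)) := rpow_pos_of_pos hB _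
    rw [hθdef, hTdef, hρw, hinv, hpw, hsplit, hρref]
    rw [show -(N ^ 2 * w) / g = -(N ^ 2 * w / g) from by ring, Real.exp_neg]
    field_simp
  have hcont : ContinuousAt
      (fun w => 1 - (g / N ^ 2) * Γ * (ρref / pref) * (1 - exp (-(N ^ 2 * w) / g))) z := by
    fun_prop
  have hev : θ =ᶠ[nhds z] fun w => Tref * exp (N ^ 2 * w / g) := by
    have hpre : (fun w => 1 - (g / N ^ 2) * Γ * (ρref / pref) * (1 - exp (-(N ^ 2 * w) / g)))
        ⁻¹' Set.Ioi 0 ∈ nhds z := hcont (Ioi_mem_nhds hbase)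
    filter_upwards [hpre] with w hw
    exact key w hw
  have hD : HasDerivAt (fun w => Tref * exp (N ^ 2 * w / g))
      ((N ^ 2 / g) * (Tref * exp (N ^ 2 * z / g))) z := by
    have h1 : HasDerivAt (fun w : ℝ => N ^ 2 * w / g) (N ^ 2 / g) z := by
      simpa using ((hasDerivAt_id z).const_mul (N ^ 2)).div_const g
    have h2 := (h1.exp).const_mul Tref
    exact h2.congr_deriv (by ring)
  refine ⟨key z hbase, ?_⟩
  rw [key z hbase]
  exact hD.congr_of_eventuallyEq hev
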